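/- arXiv:2101.06843 — 3 statements merged into one kernel-verified Lean document; each statement's English description precedes it below -/
import Mathlib

section
/- For every k, d ≥ 1, sup_{p ∈ (0,1)} min_{t ∈ {1,…,k}} C_∅(p,t)/(d·t) = ( sup_{p ∈ (0,1)} C_∅(p,k) )/(d·k); in particular, for every p ∈ (0,1) the minimum over t ∈ {1,…,k} of C_∅(p,t)/t equals C_∅(p,k)/k. -/
open Finset
open scoped Classical

noncomputable section

/-- The Bernoulli probability mass function on `Bool` with parameter `p`. -/
def bern (p : ℝ) (b : Bool) : ℝ := if b then p else 1 - p

/-- The binary OR of a finite family of bits. -/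
def orB {t : ℕ} (x : Fin t → Bool) : Bool := decide (∃ i, x i = true)

/-- The output marginal pmf: `P_Y(y) = Σ_x (∏_i Bern(p)(x_i)) · W(y | OR(x))`. -/
def outP {Y : Type} [Fintype Y] (W : Y → Bool → ℝ) (p : ℝ) (t : ℕ) (y : Y) : ℝ :=
  ∑ x : Fin t → Bool, (∏ i, bern p (x i)) * W y (orB x)

/-- `C_∅(p,t) = I(X_1,…,X_t ; Y)`: the mutual information (natural logarithm) where
`X_1,…,X_t` are i.i.d. Bernoulli(`p`), `Z` is their binary OR, and `Y ∼ W(·|Z)` with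
`W = P^{f(p)}`; computed as the expectation of the information density
`log(W(y|OR(x)) / P_Y(y))` under the joint law. -/
def Cempty {Y : Type} [Fintype Y] (W : Y → Bool → ℝ) (p : ℝ) (t : ℕ) : ℝ :=
  ∑ x : Fin t → Bool, ∑ y : Y,
    ((∏ i, bern p (x i)) * W y (orB x)) * Real.log (W y (orB x) / outP W p t y)

/-!
Conditioning on the OR bit `Z`, whose law is Bernoulli(`q_t`) with `q_t = 1 - (1 - p)^t`, gives
`C_∅(p,t) = g(q_t)`, where `g(q) = H(Y) - H(Y | Z)` is the mutual information of a Bernoulli(`q`)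
input through the channel. Entropy is concave and the output law is affine in `q`, so `g` is
concave on `[0,1]`; it vanishes at `0` and `1`, hence `g ≥ 0` and `g(q)/q` is nonincreasing.
As `q_t` increases with `t` while `q_t / t` does not, `C_∅(p,t)/t = (g(q_t)/q_t) (q_t/t)` is
nonincreasing in `t`, so the minimum over `t ≤ k` is attained at `t = k`.
-/

open Real

lemma mul_mul_log_div_mix {q a b : ℝ} (hq0 : 0 ≤ q) (hq1 : q ≤ 1) (ha : 0 ≤ a) (hb : 0 ≤ b) :
    q * (a * log (a / (q * a + (1 - q) * b))) + (1 - q) * (b * log (b / (q * a + (1 - q) * b)))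
      = negMulLog (q * a + (1 - q) * b) - (q * negMulLog a + (1 - q) * negMulLog b) := by
  set m := q * a + (1 - q) * b
  have hsplit : ∀ c w, 0 ≤ c * w → c * w ≤ m →
      c * (w * log (w / m)) = c * w * log w - c * w * log m := by
    intro c w hcw hm
    rcases hcw.eq_or_lt with h | h
    · rcases mul_eq_zero.1 h.symm with rfl | rfl <;> simp
    · have hw : w ≠ 0 := by rintro rfl; simp at h
      rw [log_div hw (by linarith)]
      ring
  rw [hsplit q a (by positivity) (by nlinarith), hsplit (1 - q) b (by nlinarith) (by nlinarith)]
  simp only [negMulLog, m]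
  ring

lemma sum_prod_bern_mul_orB (p : ℝ) (t : ℕ) (F : Bool → ℝ) :
    ∑ x : Fin t → Bool, (∏ i, bern p (x i)) * F (orB x)
      = (1 - p) ^ t * F false + (1 - (1 - p) ^ t) * F true := by
  have hF : ∀ x : Fin t → Bool,
      F (orB x) = F true + if x = (fun _ => false) then F false - F true else 0 := by
    intro x
    by_cases hx : x = fun _ => false
    · simp [hx, orB]
    · have : ∃ i, x i = true := by simpa [funext_iff] using hx
      simp [hx, orB, this]
  have htotal : ∑ x : Fin t → Bool, ∏ i, bern p (x i) = 1 := by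
    rw [← Fintype.prod_sum]
    simp [bern]
  simp only [hF, mul_add, mul_ite, mul_zero, Finset.sum_add_distrib, ← Finset.sum_mul, htotal,
    Finset.sum_ite_eq', Finset.mem_univ, if_true]
  simp only [one_mul, bern, Bool.false_eq_true, ↓reduceIte, prod_const, card_univ, Fintype.card_fin]
  ring

def outMix {Y : Type} (W : Y → Bool → ℝ) (q : ℝ) (y : Y) : ℝ :=
  q * W y true + (1 - q) * W y false

def bernMutualInfo {Y : Type} [Fintype Y] (W : Y → Bool → ℝ) (q : ℝ) : ℝ :=
  ∑ y, (negMulLog (outMix W q y) - (q * negMulLog (W y true) + (1 - q) * negMulLog (W y false)))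

lemma outP_eq_outMix {Y : Type} [Fintype Y] (W : Y → Bool → ℝ) (p : ℝ) (t : ℕ) :
    outP W p t = outMix W (1 - (1 - p) ^ t) := by
  ext y
  rw [outP, sum_prod_bern_mul_orB, outMix]
  ring

lemma bernMutualInfo_eq_sum_mul_log_div {Y : Type} [Fintype Y] {W : Y → Bool → ℝ}
    (hW : ∀ y z, 0 ≤ W y z) {q : ℝ} (hq0 : 0 ≤ q) (hq1 : q ≤ 1) :
    bernMutualInfo W q = q * ∑ y, W y true * log (W y true / outMix W q y)
      + (1 - q) * ∑ y, W y false * log (W y false / outMix W q y) := by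
  rw [Finset.mul_sum, Finset.mul_sum, ← Finset.sum_add_distrib, bernMutualInfo]
  exact Finset.sum_congr rfl fun y _ => (mul_mul_log_div_mix hq0 hq1 (hW y true) (hW y false)).symm

lemma Cempty_eq_bernMutualInfo {Y : Type} [Fintype Y] {W : Y → Bool → ℝ}
    (hW : ∀ y z, 0 ≤ W y z) {p : ℝ} (hp0 : 0 ≤ p) (hp1 : p ≤ 1) (t : ℕ) :
    Cempty W p t = bernMutualInfo W (1 - (1 - p) ^ t) := by
  have hr0 : 0 ≤ (1 - p) ^ t := pow_nonneg (by linarith) t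
  have hr1 : (1 - p) ^ t ≤ 1 := pow_le_one₀ (by linarith) (by linarith)
  simp only [Cempty, outP_eq_outMix, mul_assoc, ← Finset.mul_sum]
  rw [sum_prod_bern_mul_orB p t fun z => ∑ y, W y z * log (W y z / outMix W (1 - (1 - p) ^ t) y),
    bernMutualInfo_eq_sum_mul_log_div hW (by linarith) (by linarith)]
  ring

lemma concaveOn_bernMutualInfo {Y : Type} [Fintype Y] {W : Y → Bool → ℝ}
    (hW : ∀ y z, 0 ≤ W y z) : ConcaveOn ℝ (Set.Icc 0 1) (bernMutualInfo W) := by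
  refine ⟨convex_Icc 0 1, fun x hx x' hx' a b ha hb hab => ?_⟩
  simp only [bernMutualInfo, smul_eq_mul, Finset.mul_sum, ← Finset.sum_add_distrib]
  refine Finset.sum_le_sum fun y _ => ?_
  have hmix : ∀ {q}, q ∈ Set.Icc (0 : ℝ) 1 → outMix W q y ∈ Set.Ici 0 := fun hq => by
    have := hW y true; have := hW y false
    simp only [outMix, Set.mem_Ici]; nlinarith [hq.1, hq.2]
  have hconc := concaveOn_negMulLog.2 (hmix hx) (hmix hx') ha hb hab
  have hlin : outMix W (a * x + b * x') y = a * outMix W x y + b * outMix W x' y := by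
    simp only [outMix]; linear_combination (-W y false) * hab
  simp only [smul_eq_mul] at hconc
  rw [hlin]
  linear_combination hconc - negMulLog (W y false) * hab

lemma bernMutualInfo_zero {Y : Type} [Fintype Y] (W : Y → Bool → ℝ) : bernMutualInfo W 0 = 0 := by
  simp [bernMutualInfo, outMix]

lemma bernMutualInfo_one {Y : Type} [Fintype Y] (W : Y → Bool → ℝ) : bernMutualInfo W 1 = 0 := by
  simp [bernMutualInfo, outMix]

lemma ConcaveOn.div_le_div_of_map_zero {s : Set ℝ} {f : ℝ → ℝ} (hf : ConcaveOn ℝ s f)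
    (h0 : 0 ∈ s) (hf0 : f 0 = 0) {x y : ℝ} (hx : x ∈ s) (hy : y ∈ s) (hx0 : 0 < x)
    (hxy : x ≤ y) : f y / y ≤ f x / x := by
  have := hf.neg.secant_mono h0 hx hy hx0.ne' (hx0.trans_le hxy).ne' hxy
  simpa [hf0, neg_div] using this

lemma mul_one_sub_pow_le {r : ℝ} (hr0 : 0 ≤ r) (hr1 : r ≤ 1) {t k : ℕ} (htk : t ≤ k) :
    t * (1 - r ^ k) ≤ k * (1 - r ^ t) := by
  induction k, htk using Nat.le_induction with
  | base => rfl
  | succ k htk ih =>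
    have hsum : t * r ^ k ≤ ∑ i ∈ range t, r ^ i := by
      simpa using Finset.card_nsmul_le_sum (range t) (r ^ ·) (r ^ k)
        fun i hi => pow_le_pow_of_le_one hr0 hr1 (by simp at hi; omega)
    have := mul_le_mul_of_nonneg_right hsum (sub_nonneg.2 hr1)
    rw [geom_sum_mul_neg] at this
    push_cast
    linear_combination ih + this

lemma Cempty_div_le_Cempty_div {Y : Type} [Fintype Y] {W : Y → Bool → ℝ}
    (hW : ∀ y z, 0 ≤ W y z) {p : ℝ} (hp0 : 0 < p) (hp1 : p ≤ 1) {t k : ℕ} (ht : 1 ≤ t)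
    (htk : t ≤ k) : Cempty W p k / k ≤ Cempty W p t / t := by
  rw [Cempty_eq_bernMutualInfo hW hp0.le hp1, Cempty_eq_bernMutualInfo hW hp0.le hp1]
  set g := bernMutualInfo W
  set r := 1 - p
  have hr0 : 0 ≤ r := sub_nonneg.2 hp1
  have hr1 : r < 1 := by linarith
  have hqt : 0 < 1 - r ^ t := sub_pos.2 (pow_lt_one₀ hr0 hr1 (by omega))
  have hqtk : 1 - r ^ t ≤ 1 - r ^ k := sub_le_sub_left (pow_le_pow_of_le_one hr0 hr1.le htk) 1
  have ht0 : (0 : ℝ) < t := by exact_mod_cast ht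
  have hk0 : (0 : ℝ) < k := by exact_mod_cast ht.trans htk
  have hmem : ∀ n, 1 - r ^ n ∈ Set.Icc (0 : ℝ) 1 := fun n =>
    ⟨sub_nonneg.2 (pow_le_one₀ hr0 hr1.le), sub_le_self 1 (pow_nonneg hr0 n)⟩
  have hconc := concaveOn_bernMutualInfo hW
  have hg_nonneg : 0 ≤ g (1 - r ^ t) := by
    simpa [g, bernMutualInfo_zero, bernMutualInfo_one] using
      hconc.min_le_of_mem_Icc (Set.left_mem_Icc.2 zero_le_one) (Set.right_mem_Icc.2 zero_le_one)
        (hmem t)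
  have hslope : g (1 - r ^ k) / (1 - r ^ k) ≤ g (1 - r ^ t) / (1 - r ^ t) :=
    hconc.div_le_div_of_map_zero (Set.left_mem_Icc.2 zero_le_one) (bernMutualInfo_zero W)
      (hmem t) (hmem k) hqt hqtk
  have hratio : (1 - r ^ k) / k ≤ (1 - r ^ t) / t := by
    rw [div_le_div_iff₀ hk0 ht0]
    linarith [mul_one_sub_pow_le hr0 hr1.le htk]
  calc g (1 - r ^ k) / k = g (1 - r ^ k) / (1 - r ^ k) * ((1 - r ^ k) / k) := by
        field_simp [(hqt.trans_le hqtk).ne']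
    _ ≤ g (1 - r ^ t) / (1 - r ^ t) * ((1 - r ^ k) / k) := by
        have := (hmem k).1
        gcongr
    _ ≤ g (1 - r ^ t) / (1 - r ^ t) * ((1 - r ^ t) / t) := by gcongr
    _ = g (1 - r ^ t) / t := by field_simp

lemma sSup_image_div_of_nonneg {α : Type*} (f : α → ℝ) (s : Set α) {c : ℝ} (hc : 0 ≤ c) :
    sSup ((fun x => f x / c) '' s) = sSup (f '' s) / c := by
  simp_rw [div_eq_inv_mul, ← smul_eq_mul, ← Real.sSup_smul_of_nonneg (inv_nonneg.2 hc),
    ← Set.image_smul, Set.image_image]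

lemma inf'_Icc_div_mul_eq {g : ℕ → ℝ} {k : ℕ} (hk : 1 ≤ k)
    (hg : ∀ t, 1 ≤ t → t ≤ k → g k / k ≤ g t / t) {c : ℝ} (hc : 0 ≤ c)
    (hne : (Icc 1 k).Nonempty) :
    (Icc 1 k).inf' hne (fun t => g t / (c * t)) = g k / (c * k) := by
  refine le_antisymm (inf'_le _ (mem_Icc.2 ⟨hk, le_rfl⟩)) (le_inf' _ _ fun t ht => ?_)
  obtain ⟨ht1, htk⟩ := mem_Icc.1 ht
  simp only [mul_comm c, ← div_div]
  exact div_le_div_of_nonneg_right (hg t ht1 htk) hc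

theorem statement5_general (Y : Type) [Fintype Y] (f : ℝ → ℝ) (P : ℝ → Y → Bool → ℝ)
    (hP0 : ∀ q y z, 0 ≤ P q y z)
    (d k : ℕ) (hk : 1 ≤ k) :
    sSup ((fun p : ℝ => (Finset.Icc 1 k).inf' ⟨1, Finset.mem_Icc.mpr ⟨le_rfl, hk⟩⟩
          (fun t => Cempty (P (f p)) p t / ((d : ℝ) * t))) '' Set.Ioo 0 1) =
      sSup ((fun p : ℝ => Cempty (P (f p)) p k) '' Set.Ioo 0 1) / ((d : ℝ) * k) ∧
    ∀ p ∈ Set.Ioo (0 : ℝ) 1,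
      (Finset.Icc 1 k).inf' ⟨1, Finset.mem_Icc.mpr ⟨le_rfl, hk⟩⟩
          (fun t => Cempty (P (f p)) p t / (t : ℝ)) =
        Cempty (P (f p)) p k / (k : ℝ) := by
  have hmin : ∀ p ∈ Set.Ioo (0 : ℝ) 1, ∀ c : ℝ, 0 ≤ c →
      (Icc 1 k).inf' ⟨1, mem_Icc.mpr ⟨le_rfl, hk⟩⟩ (fun t => Cempty (P (f p)) p t / (c * t))
        = Cempty (P (f p)) p k / (c * k) := fun p hp c hc =>
    inf'_Icc_div_mul_eq hk (fun _ ht htk => Cempty_div_le_Cempty_div (hP0 _) hp.1 hp.2.le ht htk)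
      hc _
  refine ⟨?_, fun p hp => by simpa using hmin p hp 1 zero_le_one⟩
  rw [Set.image_congr fun p hp => hmin p hp d d.cast_nonneg,
    sSup_image_div_of_nonneg _ _ (by positivity)]

/-- for every `k, d ≥ 1`,
`sup_{p ∈ (0,1)} min_{t ∈ [k]} C_∅(p,t)/(d·t) = (sup_{p ∈ (0,1)} C_∅(p,k))/(d·k)`;
in particular, for every `p ∈ (0,1)`, `min_{t ∈ [k]} C_∅(p,t)/t = C_∅(p,k)/k`. -/
theorem statement5 (Y : Type) [Fintype Y] (f : ℝ → ℝ) (P : ℝ → Y → Bool → ℝ)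
    (hP0 : ∀ q y z, 0 ≤ P q y z) (hP1 : ∀ q z, ∑ y : Y, P q y z = 1)
    (d k : ℕ) (hd : 1 ≤ d) (hk : 1 ≤ k) :
    sSup ((fun p : ℝ => (Finset.Icc 1 k).inf' ⟨1, Finset.mem_Icc.mpr ⟨le_rfl, hk⟩⟩
          (fun t => Cempty (P (f p)) p t / ((d : ℝ) * t))) '' Set.Ioo 0 1) =
      sSup ((fun p : ℝ => Cempty (P (f p)) p k) '' Set.Ioo 0 1) / ((d : ℝ) * k) ∧
    ∀ p ∈ Set.Ioo (0 : ℝ) 1,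
      (Finset.Icc 1 k).inf' ⟨1, Finset.mem_Icc.mpr ⟨le_rfl, hk⟩⟩
          (fun t => Cempty (P (f p)) p t / (t : ℝ)) =
        Cempty (P (f p)) p k / (k : ℝ) :=
  statement5_general Y f P hP0 d k hk
end
end

section
/- Interference property of the binary OR multiple access channel: let t ≥ 2, p ∈ (0,1), and let W be nondegenerate (W(·|0) ≠ W(·|1)). Then for every s with 1 ≤ s < t, the blocks (X_1,…,X_s) and (X_{s+1},…,X_t) are conditionally dependent given Y; equivalently, the conditional mutual information I(X_1,…,X_s ; X_{s+1},…,X_t | Y) is strictly positive. -/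
open Finset
open scoped Classical

noncomputable section

/-- Conditional mutual information `I(A;B|C)` (natural logarithm) of a joint pmf on a
product of three finite sets, conditioning on the third coordinate. -/
def CMI {A B C : Type} [Fintype A] [Fintype B] [Fintype C] (μ : A → B → C → ℝ) : ℝ :=
  ∑ a : A, ∑ b : B, ∑ c : C,
    μ a b c * Real.log ((μ a b c * (∑ a' : A, ∑ b' : B, μ a' b' c)) /
      ((∑ b' : B, μ a b' c) * (∑ a' : A, μ a' b c)))

/-- Joint pmf of `((X_1,…,X_s), (X_{s+1},…,X_{s+r}), Y)` for the `(s+r)`-user binary OR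
multiple access channel at parameter `p` with channel `W`. -/
def macACY {Y : Type} [Fintype Y] (W : Y → Bool → ℝ) (p : ℝ) (s r : ℕ)
    (a : Fin s → Bool) (c : Fin r → Bool) (y : Y) : ℝ :=
  (∏ i, bern p (a i)) * (∏ j, bern p (c j)) * W y (orB a || orB c)

/-! ### Auxiliary lemmas -/

lemma bern_nonneg {p : ℝ} (h0 : 0 ≤ p) (h1 : p ≤ 1) (b : Bool) : 0 ≤ bern p b := by
  cases b <;> simp [bern] <;> linarith

lemma sum_bern (p : ℝ) : ∑ b : Bool, bern p b = 1 := by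
  simp [bern]

lemma sum_bern_pi (p : ℝ) (n : ℕ) : ∑ x : Fin n → Bool, ∏ i, bern p (x i) = 1 := by
  have h := Finset.sum_prod_piFinset (Finset.univ : Finset Bool)
    (fun (_ : Fin n) (b : Bool) => bern p b)
  rw [Fintype.piFinset_univ] at h
  rw [h]
  have hb : bern p true + bern p false = 1 := by simp [bern]
  simp [hb]

lemma orB_const_false {n : ℕ} : orB (fun _ : Fin n => false) = false := by
  simp [orB]

lemma orB_eq_true_of_ne {n : ℕ} {x : Fin n → Bool} (h : x ≠ fun _ => false) :
    orB x = true := by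
  rw [orB, decide_eq_true_eq]
  by_contra hc
  push_neg at hc
  exact h (funext fun i => by simpa using hc i)

lemma prod_bern_const_false (p : ℝ) (n : ℕ) :
    (∏ _i : Fin n, bern p false) = (1 - p) ^ n := by
  simp [bern]

/-- Key marginalization identity: summing `π_x f(orB x)` over all bit vectors. -/
lemma sum_pi_or (p : ℝ) (n : ℕ) (f : Bool → ℝ) :
    ∑ x : Fin n → Bool, (∏ i, bern p (x i)) * f (orB x)
      = (1 - p) ^ n * f false + (1 - (1 - p) ^ n) * f true := by
  classical
  have hmem : (fun _ => false : Fin n → Bool) ∈ (Finset.univ : Finset (Fin n → Bool)) :=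
    Finset.mem_univ _
  have h0 : (∏ i, bern p ((fun _ => false : Fin n → Bool) i)) = (1 - p) ^ n := by
    simpa using prod_bern_const_false p n
  have h2 : ∑ x ∈ Finset.univ.erase (fun _ => false : Fin n → Bool), ∏ i, bern p (x i)
      = 1 - (1 - p) ^ n := by
    have ht := sum_bern_pi p n
    rw [← Finset.add_sum_erase _ (fun x => ∏ i, bern p (x i)) hmem] at ht
    simp only at ht
    rw [h0] at ht
    linarith
  rw [← Finset.add_sum_erase _ (fun x => (∏ i, bern p (x i)) * f (orB x)) hmem]
  have h1 : ∑ x ∈ Finset.univ.erase (fun _ => false : Fin n → Bool),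
      (∏ i, bern p (x i)) * f (orB x)
      = (∑ x ∈ Finset.univ.erase (fun _ => false : Fin n → Bool), ∏ i, bern p (x i)) * f true := by
    rw [Finset.sum_mul]
    refine Finset.sum_congr rfl fun x hx => ?_
    rw [orB_eq_true_of_ne (Finset.ne_of_mem_erase hx)]
  rw [h1, h2]
  simp only [h0, orB_const_false]

/-- Gibbs-type pointwise inequality. -/
lemma gibbs_le {u v : ℝ} (hu : 0 ≤ u) (hv : 0 ≤ v) (huv : 0 < u → 0 < v) :
    u - v ≤ u * Real.log (u / v) := by
  rcases hu.eq_or_lt with h | h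
  · rw [← h]; simpa using hv
  · have hv' := huv h
    have h1 : Real.log (v / u) ≤ v / u - 1 := Real.log_le_sub_one_of_pos (by positivity)
    have h2 : Real.log (u / v) = -Real.log (v / u) := by
      rw [← Real.log_inv, inv_div]
    have h4 : u * Real.log (v / u) ≤ u * (v / u - 1) := mul_le_mul_of_nonneg_left h1 h.le
    have h5 : u * (v / u - 1) = v - u := by field_simp
    rw [h2]
    nlinarith
  
/-- Strict Gibbs-type pointwise inequality. -/
lemma gibbs_lt {u v : ℝ} (hv : 0 < v) (h : u = 0 ∨ (0 < u ∧ u ≠ v)) :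
    u - v < u * Real.log (u / v) := by
  rcases h with h | ⟨hu, hne⟩
  · rw [h]; simpa using hv
  · have hone : v / u ≠ 1 := by
      intro hc
      exact hne ((div_eq_one_iff_eq (ne_of_gt hu)).mp hc).symm
    have h1 : Real.log (v / u) < v / u - 1 := Real.log_lt_sub_one_of_pos (by positivity) hone
    have h2 : Real.log (u / v) = -Real.log (v / u) := by
      rw [← Real.log_inv, inv_div]
    have h4 : u * Real.log (v / u) < u * (v / u - 1) := by
      exact (mul_lt_mul_iff_right₀ hu).mpr h1
    have h5 : u * (v / u - 1) = v - u := by field_simp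
    rw [h2]
    nlinarith

/-- Strict comparison of triple sums. -/
lemma sum3_lt {A B C : Type} [Fintype A] [Fintype B] [Fintype C]
    (f g : A → B → C → ℝ) (h : ∀ a b c, f a b c ≤ g a b c)
    (a0 : A) (b0 : B) (c0 : C) (hlt : f a0 b0 c0 < g a0 b0 c0) :
    ∑ a, ∑ b, ∑ c, f a b c < ∑ a, ∑ b, ∑ c, g a b c := by
  refine Finset.sum_lt_sum
    (fun a _ => Finset.sum_le_sum fun b _ => Finset.sum_le_sum fun c _ => h a b c)
    ⟨a0, Finset.mem_univ _, ?_⟩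
  refine Finset.sum_lt_sum
    (fun b _ => Finset.sum_le_sum fun c _ => h a0 b c)
    ⟨b0, Finset.mem_univ _, ?_⟩
  exact Finset.sum_lt_sum (fun c _ => h a0 b0 c) ⟨c0, Finset.mem_univ _, hlt⟩

/-- interference property of the binary OR multiple access channel.  For
`t = s + r ≥ 2` users (`1 ≤ s < t`), `p ∈ (0,1)` and a nondegenerate channel `W`, the blocks
`(X_1,…,X_s)` and `(X_{s+1},…,X_t)` are conditionally dependent given `Y`; equivalently
`I(X_1,…,X_s ; X_{s+1},…,X_t | Y) > 0`. -/
theorem statement9 (Y : Type) [Fintype Y] (W : Y → Bool → ℝ)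
    (hW0 : ∀ y z, 0 ≤ W y z) (hW1 : ∀ z, ∑ y : Y, W y z = 1)
    (hWnd : ∃ y, W y false ≠ W y true)
    (p : ℝ) (hp : p ∈ Set.Ioo (0 : ℝ) 1)
    (s r : ℕ) (hs : 1 ≤ s) (hr : 1 ≤ r) :
    0 < CMI (macACY W p s r) := by
  classical
  obtain ⟨hp0, hp1⟩ := hp
  have hq0 : (0:ℝ) < 1 - p := by linarith
  have hq1 : (1:ℝ) - p < 1 := by linarith
  set α : ℝ := (1 - p) ^ s with hαdef
  set β : ℝ := (1 - p) ^ r with hβdef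
  have hα0 : 0 < α := by positivity
  have hβ0 : 0 < β := by positivity
  have hα1 : α < 1 := pow_lt_one₀ hq0.le hq1 (by omega)
  have hβ1 : β < 1 := pow_lt_one₀ hq0.le hq1 (by omega)
  -- choose a good output symbol
  obtain ⟨y0, hy1, hyne⟩ : ∃ y, W y true ≠ 0 ∧ W y false ≠ W y true := by
    by_contra hcon
    push_neg at hcon
    have hsum : ∑ y : Y, (W y false - W y true) = 0 := by
      rw [Finset.sum_sub_distrib, hW1, hW1]; ring
    have hnn : ∀ y ∈ (Finset.univ : Finset Y), 0 ≤ W y false - W y true := by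
      intro y _
      by_cases hy : W y true = 0
      · rw [hy]; simpa using hW0 y false
      · rw [hcon y hy]; simp
    have hz := (Finset.sum_eq_zero_iff_of_nonneg hnn).mp hsum
    obtain ⟨y, hy⟩ := hWnd
    have hzy := hz y (Finset.mem_univ y)
    by_cases hy' : W y true = 0
    · exact hy (by linarith)
    · exact hy (hcon y hy')
  have hy1' : 0 < W y0 true := lt_of_le_of_ne (hW0 y0 true) (Ne.symm hy1)
  set μ : (Fin s → Bool) → (Fin r → Bool) → Y → ℝ := macACY W p s r with hμdef
  have hμ : ∀ (a : Fin s → Bool) (b : Fin r → Bool) (y : Y),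
      μ a b y = (∏ i, bern p (a i)) * (∏ j, bern p (b j)) * W y (orB a || orB b) :=
    fun _ _ _ => rfl
  have hπnn : ∀ {n : ℕ} (x : Fin n → Bool), 0 ≤ ∏ i, bern p (x i) :=
    fun x => Finset.prod_nonneg fun i _ => bern_nonneg hp0.le hp1.le _
  have hμnn : ∀ a b y, 0 ≤ μ a b y := by
    intro a b y
    rw [hμ]
    exact mul_nonneg (mul_nonneg (hπnn a) (hπnn b)) (hW0 _ _)
  -- marginal formulas
  have hinner : ∀ (a : Fin s → Bool) (y : Y),
      ∑ b, μ a b y = (∏ i, bern p (a i)) * (β * W y (orB a) + (1 - β) * W y true) := by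
    intro a y
    have h := sum_pi_or p r (fun z => W y (orB a || z))
    calc ∑ b, μ a b y = ∑ b : Fin r → Bool,
          (∏ i, bern p (a i)) * ((∏ j, bern p (b j)) * W y (orB a || orB b)) := by
          refine Finset.sum_congr rfl fun b _ => ?_
          rw [hμ]; ring
      _ = (∏ i, bern p (a i)) * ∑ b : Fin r → Bool,
          (∏ j, bern p (b j)) * W y (orB a || orB b) := by
          rw [Finset.mul_sum]
      _ = (∏ i, bern p (a i)) * (β * W y (orB a) + (1 - β) * W y true) := by
          rw [h]; rw [hβdef]; simp
  have hmB : ∀ (b : Fin r → Bool) (y : Y),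
      ∑ a, μ a b y = (∏ j, bern p (b j)) * (α * W y (orB b) + (1 - α) * W y true) := by
    intro b y
    have h := sum_pi_or p s (fun z => W y (z || orB b))
    calc ∑ a, μ a b y = ∑ a : Fin s → Bool,
          (∏ j, bern p (b j)) * ((∏ i, bern p (a i)) * W y (orB a || orB b)) := by
          refine Finset.sum_congr rfl fun a _ => ?_
          rw [hμ]; ring
      _ = (∏ j, bern p (b j)) * ∑ a : Fin s → Bool,
          (∏ i, bern p (a i)) * W y (orB a || orB b) := by
          rw [Finset.mul_sum]
      _ = (∏ j, bern p (b j)) * (α * W y (orB b) + (1 - α) * W y true) := by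
          rw [h]; rw [hαdef]; simp
  have hν : ∀ y : Y, ∑ a, ∑ b, μ a b y = α * β * W y false + (1 - α * β) * W y true := by
    intro y
    have h2 : ∀ a : Fin s → Bool, ∑ b, μ a b y
        = (∏ i, bern p (a i)) * (β * W y (orB a) + (1 - β) * W y true) := fun a => hinner a y
    rw [Finset.sum_congr rfl fun a _ => h2 a]
    have h := sum_pi_or p s (fun z => β * W y z + (1 - β) * W y true)
    rw [h, ← hαdef]
    ring
  -- the special point
  set a0 : Fin s → Bool := fun _ => false with ha0def
  set b0 : Fin r → Bool := fun _ => false with hb0def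
  have hπa0 : (∏ i, bern p (a0 i)) = α := by
    rw [ha0def, hαdef]; simpa using prod_bern_const_false p s
  have hπb0 : (∏ j, bern p (b0 j)) = β := by
    rw [hb0def, hβdef]; simpa using prod_bern_const_false p r
  have hora0 : orB a0 = false := orB_const_false
  have horb0 : orB b0 = false := orB_const_false
  have hμ00 : μ a0 b0 y0 = α * β * W y0 false := by
    rw [hμ, hπa0, hπb0, hora0, horb0]
    simp
  have hmA00 : ∑ b, μ a0 b y0 = α * (β * W y0 false + (1 - β) * W y0 true) := by
    rw [hinner a0 y0, hπa0, hora0]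
  have hmB00 : ∑ a, μ a b0 y0 = β * (α * W y0 false + (1 - α) * W y0 true) := by
    rw [hmB b0 y0, hπb0, horb0]
  have hν0 : ∑ a, ∑ b, μ a b y0 = α * β * W y0 false + (1 - α * β) * W y0 true := hν y0
  -- positivity of the marginals at the special point
  have hαβ1 : α * β < 1 := by nlinarith
  have hW0y0 := hW0 y0 false
  have hab1 := mul_pos (sub_pos.mpr hαβ1) hy1'
  have ha1 := mul_pos (sub_pos.mpr hα1) hy1'
  have hb1 := mul_pos (sub_pos.mpr hβ1) hy1'
  have habW := mul_nonneg (mul_nonneg hα0.le hβ0.le) hW0y0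
  have haW := mul_nonneg hα0.le hW0y0
  have hbW := mul_nonneg hβ0.le hW0y0
  have hν0pos : 0 < ∑ a, ∑ b, μ a b y0 := by
    rw [hν0]; linarith
  have hmA0pos : 0 < ∑ b, μ a0 b y0 := by
    rw [hmA00]
    have : 0 < β * W y0 false + (1 - β) * W y0 true := by linarith
    exact mul_pos hα0 this
  have hmB0pos : 0 < ∑ a, μ a b0 y0 := by
    rw [hmB00]
    have : 0 < α * W y0 false + (1 - α) * W y0 true := by linarith
    exact mul_pos hβ0 this
  -- pointwise inequalities
  have key_le : ∀ (a : Fin s → Bool) (b : Fin r → Bool) (y : Y),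
      μ a b y - (∑ b', μ a b' y) * (∑ a', μ a' b y) / (∑ a', ∑ b', μ a' b' y)
        ≤ μ a b y * Real.log ((μ a b y * ∑ a', ∑ b', μ a' b' y) /
            ((∑ b', μ a b' y) * (∑ a', μ a' b y))) := by
    intro a b y
    have hrw : (μ a b y * ∑ a', ∑ b', μ a' b' y) / ((∑ b', μ a b' y) * (∑ a', μ a' b y))
        = μ a b y / ((∑ b', μ a b' y) * (∑ a', μ a' b y) / (∑ a', ∑ b', μ a' b' y)) := by
      rw [div_div_eq_mul_div]
    rw [hrw]
    have h1 : 0 ≤ ∑ b', μ a b' y := Finset.sum_nonneg fun b' _ => hμnn a b' y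
    have h2 : 0 ≤ ∑ a', μ a' b y := Finset.sum_nonneg fun a' _ => hμnn a' b y
    have h3 : 0 ≤ ∑ a', ∑ b', μ a' b' y :=
      Finset.sum_nonneg fun a' _ => Finset.sum_nonneg fun b' _ => hμnn a' b' y
    refine gibbs_le (hμnn a b y) (div_nonneg (mul_nonneg h1 h2) h3) ?_
    intro hu
    have h1' : 0 < ∑ b', μ a b' y :=
      lt_of_lt_of_le hu (Finset.single_le_sum (fun b' _ => hμnn a b' y) (Finset.mem_univ b))
    have h2' : 0 < ∑ a', μ a' b y :=
      lt_of_lt_of_le hu (Finset.single_le_sum (fun a' _ => hμnn a' b y) (Finset.mem_univ a))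
    have h3' : 0 < ∑ a', ∑ b', μ a' b' y :=
      lt_of_lt_of_le h1' (Finset.single_le_sum (f := fun a' => ∑ b', μ a' b' y)
        (fun a' _ => Finset.sum_nonneg fun b' _ => hμnn a' b' y) (Finset.mem_univ a))
    exact div_pos (mul_pos h1' h2') h3' 
  have key_lt : μ a0 b0 y0 - (∑ b', μ a0 b' y0) * (∑ a', μ a' b0 y0) / (∑ a', ∑ b', μ a' b' y0)
      < μ a0 b0 y0 * Real.log ((μ a0 b0 y0 * ∑ a', ∑ b', μ a' b' y0) /
          ((∑ b', μ a0 b' y0) * (∑ a', μ a' b0 y0))) := by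
    have hrw : (μ a0 b0 y0 * ∑ a', ∑ b', μ a' b' y0) /
          ((∑ b', μ a0 b' y0) * (∑ a', μ a' b0 y0))
        = μ a0 b0 y0 / ((∑ b', μ a0 b' y0) * (∑ a', μ a' b0 y0) / (∑ a', ∑ b', μ a' b' y0)) := by
      rw [div_div_eq_mul_div]
    rw [hrw]
    refine gibbs_lt (div_pos (mul_pos hmA0pos hmB0pos) hν0pos) ?_
    by_cases hW00 : W y0 false = 0
    · left; rw [hμ00, hW00]; ring
    · right
      have hW00' : 0 < W y0 false := lt_of_le_of_ne (hW0 y0 false) (Ne.symm hW00)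
      constructor
      · rw [hμ00]; exact mul_pos (mul_pos hα0 hβ0) hW00' 
      · intro heq
        have hne0 : (∑ a', ∑ b', μ a' b' y0) ≠ 0 := ne_of_gt hν0pos
        have heq2 : μ a0 b0 y0 * (∑ a', ∑ b', μ a' b' y0)
            = (∑ b', μ a0 b' y0) * (∑ a', μ a' b0 y0) := by
          rw [heq, div_mul_cancel₀ _ hne0]
        rw [hμ00, hmA00, hmB00, hν0] at heq2
        have hfac : (α * β * (1 - α) * (1 - β) * W y0 true) * (W y0 false - W y0 true) = 0 := by
          linear_combination heq2
        have hd : W y0 false - W y0 true ≠ 0 := sub_ne_zero.mpr hyne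
        have hcpos : 0 < α * β * (1 - α) * (1 - β) * W y0 true :=
          mul_pos (mul_pos (mul_pos (mul_pos hα0 hβ0) (sub_pos.mpr hα1))
            (sub_pos.mpr hβ1)) hy1'
        exact (mul_ne_zero hcpos.ne' hd) hfac
  -- assemble
  have hCMI : CMI μ = ∑ a, ∑ b, ∑ y,
      μ a b y * Real.log ((μ a b y * ∑ a', ∑ b', μ a' b' y) /
        ((∑ b', μ a b' y) * (∑ a', μ a' b y))) := rfl
  have hstep : ∑ a, ∑ b, ∑ y, (μ a b y -
        (∑ b', μ a b' y) * (∑ a', μ a' b y) / (∑ a', ∑ b', μ a' b' y))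
      < CMI μ := by
    rw [hCMI]
    exact sum3_lt _ _ (fun a b y => key_le a b y) a0 b0 y0 key_lt
  have hcomm : ∀ F : (Fin s → Bool) → (Fin r → Bool) → Y → ℝ,
      ∑ a, ∑ b, ∑ y, F a b y = ∑ y, ∑ a, ∑ b, F a b y := by
    intro F
    calc ∑ a, ∑ b, ∑ y, F a b y = ∑ a, ∑ y, ∑ b, F a b y :=
        Finset.sum_congr rfl fun a _ => Finset.sum_comm
      _ = ∑ y, ∑ a, ∑ b, F a b y := Finset.sum_comm
  have hsum_μ : ∑ a, ∑ b, ∑ y, μ a b y = 1 := by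
    have h1 : ∀ (a : Fin s → Bool) (b : Fin r → Bool),
        ∑ y, μ a b y = (∏ i, bern p (a i)) * (∏ j, bern p (b j)) := by
      intro a b
      calc ∑ y, μ a b y
          = ∑ y, ((∏ i, bern p (a i)) * (∏ j, bern p (b j))) * W y (orB a || orB b) := by
            exact Finset.sum_congr rfl fun y _ => hμ a b y
        _ = ((∏ i, bern p (a i)) * (∏ j, bern p (b j))) * ∑ y, W y (orB a || orB b) := by
            rw [Finset.mul_sum]
        _ = (∏ i, bern p (a i)) * (∏ j, bern p (b j)) := by rw [hW1, mul_one]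
    calc ∑ a, ∑ b, ∑ y, μ a b y
        = ∑ a : Fin s → Bool, ∑ b : Fin r → Bool,
            (∏ i, bern p (a i)) * (∏ j, bern p (b j)) :=
          Finset.sum_congr rfl fun a _ => Finset.sum_congr rfl fun b _ => h1 a b
      _ = ∑ a : Fin s → Bool, (∏ i, bern p (a i)) := by
          refine Finset.sum_congr rfl fun a _ => ?_
          rw [← Finset.mul_sum, sum_bern_pi, mul_one]
      _ = 1 := sum_bern_pi p s
  have hσy : ∀ y : Y,
      ∑ a, ∑ b, (∑ b', μ a b' y) * (∑ a', μ a' b y) / (∑ a', ∑ b', μ a' b' y)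
        = ∑ a', ∑ b', μ a' b' y := by
    intro y
    have e1 : ∑ a, ∑ b, (∑ b', μ a b' y) * (∑ a', μ a' b y) / (∑ a', ∑ b', μ a' b' y)
        = (∑ a, ∑ b', μ a b' y) * (∑ b, ∑ a', μ a' b y) / (∑ a', ∑ b', μ a' b' y) := by
      conv_rhs => rw [Finset.sum_mul, Finset.sum_div]
      refine Finset.sum_congr rfl fun a _ => ?_
      conv_rhs => rw [Finset.mul_sum, Finset.sum_div]
    have e2 : (∑ b, ∑ a', μ a' b y) = ∑ a', ∑ b', μ a' b' y := Finset.sum_comm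
    rw [e1, e2]
    by_cases h0 : (∑ a', ∑ b', μ a' b' y) = 0
    · rw [h0]; simp
    · rw [mul_div_assoc, div_self h0, mul_one]
  have hsum_σ : ∑ a, ∑ b, ∑ y,
      (∑ b', μ a b' y) * (∑ a', μ a' b y) / (∑ a', ∑ b', μ a' b' y) = 1 := by
    rw [hcomm]
    rw [Finset.sum_congr rfl fun y _ => hσy y]
    rw [← hcomm fun a b y => μ a b y]
    exact hsum_μ
  have hsplit : ∑ a, ∑ b, ∑ y, (μ a b y -
        (∑ b', μ a b' y) * (∑ a', μ a' b y) / (∑ a', ∑ b', μ a' b' y))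
      = (∑ a, ∑ b, ∑ y, μ a b y)
        - ∑ a, ∑ b, ∑ y, (∑ b', μ a b' y) * (∑ a', μ a' b y) / (∑ a', ∑ b', μ a' b' y) := by
    simp [Finset.sum_sub_distrib]
  rw [hsum_μ, hsum_σ] at hsplit
  linarith [hstep, hsplit]
end
end

section
/- Finite-blocklength channel coding converse (information-spectrum form): let 𝒴 be a finite set, n, M ∈ ℕ, and for each l ∈ {1,…,n} let W_l(·|0), W_l(·|1) be strictly positive probability mass functions on 𝒴 and Q_l a strictly positive probability mass function on 𝒴. Let W̄ be uniformly distributed on {1,…,M}, let Z^n = (Z_1,…,Z_n) ∈ {0,1}^n be any (possibly randomized) function of W̄, let Y_1,…,Y_n be conditionally independent given (W̄, Z^n) with Y_l distributed as W_l(·|Z_l), and let ĝ : 𝒴^n → {1,…,M} be a decoder with error probability Pr{ ĝ(Y^n) ≠ W̄ } ≤ ε for some ε ∈ (0,1). Then for every κ ∈ (0, 1 − ε): log M ≤ sup{ ψ ∈ ℝ : Pr{ Σ_{l=1}^n log( W_l(Y_l | Z_l) / Q_l(Y_l) ) ≤ ψ } ≤ ε + κ } − log κ. -/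
open Finset

/-!
Let `p` be the joint law of message, channel input and output, and `q` the law obtained by
replacing the channel with the output law `∏ Q_l`, independent of the input. Where the
information density is at most `log (κ M)` we have `p ≤ κ M q`, so this event has `p`-probability
at most the error probability under `p` plus `κ M` times the probability of correct decoding
under `q`. Under `q` the output carries no information about the uniform message, so correct
decoding has probability `1 / M`, and the bound is `ε + κ`. Hence `log (κ M)` lies in the set
whose supremum is taken; that set is bounded above because the information density takes
finitely many values and `ε + κ < 1`.
-/

section ChangeOfMeasure

variable {α : Type*} [Fintype α]

theorem bddAbove_setOf_sum_ite_le (p i : α → ℝ) {t : ℝ} (ht : t < ∑ a, p a) :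
    BddAbove {ψ : ℝ | ∑ a, (if i a ≤ ψ then p a else 0) ≤ t} := by
  obtain ⟨B, hB⟩ := (Set.finite_range i).bddAbove
  refine ⟨B, fun ψ hψ => le_of_not_gt fun hBψ => ?_⟩
  have hall : ∀ a, i a ≤ ψ := fun a => (hB (Set.mem_range_self a)).trans hBψ.le
  simp only [Set.mem_ofPred_eq, hall, if_true] at hψ
  linarith

theorem sum_ite_le_sum_ite_not_add_mul_sum_ite {p q : α → ℝ} {c : ℝ} (A E : α → Prop)
    [DecidablePred A] [DecidablePred E] (hp : ∀ a, 0 ≤ p a) (hq : ∀ a, 0 ≤ q a) (hc : 0 ≤ c)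
    (hA : ∀ a, A a → p a ≤ c * q a) :
    ∑ a, (if A a then p a else 0) ≤
      ∑ a, (if ¬E a then p a else 0) + c * ∑ a, (if E a then q a else 0) := by
  rw [mul_sum, ← sum_add_distrib]
  refine sum_le_sum fun a _ => ?_
  by_cases hAa : A a <;> by_cases hEa : E a <;>
    simp [hAa, hEa, hA a, hp a, mul_nonneg hc (hq a)]

end ChangeOfMeasure

theorem Real.sum_log_div_le_iff {ι : Type*} {s : Finset ι} {a b : ι → ℝ}
    (ha : ∀ l, 0 < a l) (hb : ∀ l, 0 < b l) (ψ : ℝ) :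
    ∑ l ∈ s, Real.log (a l / b l) ≤ ψ ↔ ∏ l ∈ s, a l ≤ Real.exp ψ * ∏ l ∈ s, b l := by
  have hpb : 0 < ∏ l ∈ s, b l := prod_pos fun l _ => hb l
  rw [← Real.log_prod fun l _ => (div_pos (ha l) (hb l)).ne', prod_div_distrib,
    Real.log_le_iff_le_exp (div_pos (prod_pos fun l _ => ha l) hpb), div_le_iff₀ hpb]

theorem Fintype.sum_prod_eq_one {ι : Type*} [Fintype ι] [DecidableEq ι] {κ : ι → Type*}
    [∀ i, Fintype (κ i)] {f : ∀ i, κ i → ℝ} (hf : ∀ i, ∑ y, f i y = 1) :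
    ∑ y : ∀ i, κ i, ∏ i, f i (y i) = 1 := by
  rw [← Fintype.prod_sum]
  exact Finset.prod_eq_one fun i _ => hf i

section Channel

variable {ι X Y : Type*} [Fintype ι] [Fintype X] [Fintype Y]

theorem sum_mul_mul_of_stochastic (c : ℝ) {enc : ι → X → ℝ} {V : X → Y → ℝ}
    (henc : ∀ w, ∑ x, enc w x = 1) (hV : ∀ x, ∑ y, V x y = 1) :
    ∑ a : ι × X × Y, c * enc a.1 a.2.1 * V a.2.1 a.2.2 = c * Fintype.card ι := by
  calc ∑ a : ι × X × Y, c * enc a.1 a.2.1 * V a.2.1 a.2.2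
      = ∑ w, ∑ x, c * enc w x * ∑ y, V x y := by simp only [Fintype.sum_prod_type, mul_sum]
    _ = ∑ w : ι, c := by simp only [hV, mul_one, ← mul_sum, henc]
    _ = c * Fintype.card ι := by rw [sum_const, card_univ, nsmul_eq_mul, mul_comm]

theorem sum_ite_decode_mul_mul_of_stochastic [DecidableEq ι] (dec : Y → ι) (c : ℝ)
    {enc : ι → X → ℝ} (q : Y → ℝ) (henc : ∀ w, ∑ x, enc w x = 1) :
    ∑ a : ι × X × Y, (if dec a.2.2 = a.1 then c * enc a.1 a.2.1 * q a.2.2 else 0) =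
      c * ∑ y, q y := by
  calc ∑ a : ι × X × Y, (if dec a.2.2 = a.1 then c * enc a.1 a.2.1 * q a.2.2 else 0)
      = c * ∑ w, ∑ x, enc w x * ∑ y, (if dec y = w then q y else 0) := by
        simp only [Fintype.sum_prod_type, mul_sum, mul_ite_zero, mul_assoc]
    _ = c * ∑ y, ∑ w, (if dec y = w then q y else 0) := by
        simp only [← sum_mul, henc, one_mul]; rw [sum_comm]
    _ = c * ∑ y, q y := by simp only [sum_ite_eq, mem_univ, if_true]

end Channel

theorem statement19_general (Yt : Type) [Fintype Yt] (n M : ℕ) (hM : 1 ≤ M)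
    (W : Fin n → Yt → Bool → ℝ) (Q : Fin n → Yt → ℝ)
    (hW0 : ∀ l y z, 0 < W l y z) (hW1 : ∀ l z, ∑ y : Yt, W l y z = 1)
    (hQ0 : ∀ l y, 0 < Q l y) (hQ1 : ∀ l, ∑ y : Yt, Q l y = 1)
    (enc : Fin M → (Fin n → Bool) → ℝ)
    (henc0 : ∀ w z, 0 ≤ enc w z) (henc1 : ∀ w, ∑ z : Fin n → Bool, enc w z = 1)
    (dec : (Fin n → Yt) → Fin M)
    (ε κ : ℝ) (hκ : 0 < κ) (hκ2 : κ < 1 - ε)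
    (herr : ∑ w : Fin M, ∑ z : Fin n → Bool, ∑ y : Fin n → Yt,
        (if dec y ≠ w then (M : ℝ)⁻¹ * enc w z * ∏ l, W l (y l) (z l) else 0) ≤ ε) :
    Real.log M ≤
      sSup {ψ : ℝ |
          ∑ w : Fin M, ∑ z : Fin n → Bool, ∑ y : Fin n → Yt,
            (if (∑ l, Real.log (W l (y l) (z l) / Q l (y l))) ≤ ψ
              then (M : ℝ)⁻¹ * enc w z * ∏ l, W l (y l) (z l) else 0) ≤ ε + κ} -
        Real.log κ := by
  let p := fun a : Fin M × (Fin n → Bool) × (Fin n → Yt) =>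
    (M : ℝ)⁻¹ * enc a.1 a.2.1 * ∏ l, W l (a.2.2 l) (a.2.1 l)
  let q := fun a : Fin M × (Fin n → Bool) × (Fin n → Yt) =>
    (M : ℝ)⁻¹ * enc a.1 a.2.1 * ∏ l, Q l (a.2.2 l)
  let i := fun a : Fin M × (Fin n → Bool) × (Fin n → Yt) =>
    ∑ l, Real.log (W l (a.2.2 l) (a.2.1 l) / Q l (a.2.2 l))
  have hM0 : (0 : ℝ) < M := by exact_mod_cast hM
  suffices h : Real.log (κ * M) ≤ sSup {ψ : ℝ | ∑ a, (if i a ≤ ψ then p a else 0) ≤ ε + κ} by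
    rw [le_sub_iff_add_le', ← Real.log_mul hκ.ne' hM0.ne']
    convert h using 4 with ψ
    simp only [Fintype.sum_prod_type, i, p]
  have hcoef : ∀ a : Fin M × (Fin n → Bool) × (Fin n → Yt), 0 ≤ (M : ℝ)⁻¹ * enc a.1 a.2.1 :=
    fun a => mul_nonneg (inv_nonneg.2 hM0.le) (henc0 _ _)
  have hratio : ∀ a, i a ≤ Real.log (κ * M) → p a ≤ κ * M * q a := fun a ha => by
    rw [Real.sum_log_div_le_iff (fun l => hW0 _ _ _) (fun l => hQ0 _ _),
      Real.exp_log (by positivity)] at ha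
    exact (mul_le_mul_of_nonneg_left ha (hcoef a)).trans_eq (mul_left_comm _ _ _)
  have hp_sum : ∑ a, p a = 1 := by
    rw [sum_mul_mul_of_stochastic _ henc1 fun z => Fintype.sum_prod_eq_one fun l => hW1 l (z l),
      Fintype.card_fin, inv_mul_cancel₀ hM0.ne']
  have herr' : ∑ a, (if ¬dec a.2.2 = a.1 then p a else 0) ≤ ε := by
    simpa only [Fintype.sum_prod_type, ne_eq] using herr
  have hq_correct : ∑ a, (if dec a.2.2 = a.1 then q a else 0) = (M : ℝ)⁻¹ := by
    rw [← mul_one (M : ℝ)⁻¹, ← Fintype.sum_prod_eq_one hQ1]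
    exact sum_ite_decode_mul_mul_of_stochastic dec _ (fun y => ∏ l, Q l (y l)) henc1
  refine le_csSup (bddAbove_setOf_sum_ite_le p i (by linarith)) ?_
  calc _ ≤ _ := sum_ite_le_sum_ite_not_add_mul_sum_ite _ (fun a => dec a.2.2 = a.1)
        (fun a => mul_nonneg (hcoef a) (prod_pos fun l _ => hW0 _ _ _).le)
        (fun a => mul_nonneg (hcoef a) (prod_pos fun l _ => hQ0 _ _).le) (by positivity) hratio
    _ = _ + κ := by rw [hq_correct, mul_assoc, mul_inv_cancel₀ hM0.ne', mul_one]
    _ ≤ ε + κ := by gcongr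

/-- finite-blocklength channel coding converse (information-spectrum form).
A uniform message `W̄` on `{1,…,M}` is encoded (possibly stochastically, via the kernel
`enc`) into `Z^n ∈ {0,1}^n`; `Y_l ∼ W_l(·|Z_l)` conditionally independently; a decoder
`dec` has error probability at most `ε`.  Then for every `κ ∈ (0, 1 − ε)`,
`log M ≤ sup{ψ : Pr{Σ_l log(W_l(Y_l|Z_l)/Q_l(Y_l)) ≤ ψ} ≤ ε + κ} − log κ`. -/
theorem statement19 (Yt : Type) [Fintype Yt] (n M : ℕ) (hM : 1 ≤ M)
    (W : Fin n → Yt → Bool → ℝ) (Q : Fin n → Yt → ℝ)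
    (hW0 : ∀ l y z, 0 < W l y z) (hW1 : ∀ l z, ∑ y : Yt, W l y z = 1)
    (hQ0 : ∀ l y, 0 < Q l y) (hQ1 : ∀ l, ∑ y : Yt, Q l y = 1)
    (enc : Fin M → (Fin n → Bool) → ℝ)
    (henc0 : ∀ w z, 0 ≤ enc w z) (henc1 : ∀ w, ∑ z : Fin n → Bool, enc w z = 1)
    (dec : (Fin n → Yt) → Fin M)
    (ε κ : ℝ) (hε : ε ∈ Set.Ioo (0 : ℝ) 1) (hκ : 0 < κ) (hκ2 : κ < 1 - ε)
    (herr : ∑ w : Fin M, ∑ z : Fin n → Bool, ∑ y : Fin n → Yt,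
        (if dec y ≠ w then (M : ℝ)⁻¹ * enc w z * ∏ l, W l (y l) (z l) else 0) ≤ ε) :
    Real.log M ≤
      sSup {ψ : ℝ |
          ∑ w : Fin M, ∑ z : Fin n → Bool, ∑ y : Fin n → Yt,
            (if (∑ l, Real.log (W l (y l) (z l) / Q l (y l))) ≤ ψ
              then (M : ℝ)⁻¹ * enc w z * ∏ l, W l (y l) (z l) else 0) ≤ ε + κ} -
        Real.log κ :=
  statement19_general Yt n M hM W Q hW0 hW1 hQ0 hQ1 enc henc0 henc1 dec ε κ hκ hκ2 herr
end
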